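/- arXiv:cs/0602028 — 2 statements merged into one kernel-verified Lean document; each statement's English description precedes it below -/
import Mathlib

section
/- For Z a standard normal random variable and any λ > 0, the identity E[tanh(λ + √λ Z)] = E[tanh²(λ + √λ Z)] holds. -/
/-!
The law of `X = λ + √λ Z` is the Gaussian `N(λ, λ)`, whose density `p` satisfies
`p (-x) = e^{-2x} p x`. The function `g = tanh - tanh²` satisfies `g (-x) = -e^{2x} g x`, because
`e^{2x} (1 - tanh x) = 1 + tanh x`. Hence `p g` is odd, so `E[g(X)] = ∫ p g = 0`.
-/

open MeasureTheory ProbabilityTheory Real Filter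
open scoped NNReal

/-- The standard Gaussian measure on ℝ. -/
noncomputable def stdGaussian : Measure ℝ := gaussianReal 0 1

lemma Real.continuous_tanh : Continuous tanh := by
  simp_rw [funext tanh_eq_sinh_div_cosh]
  exact continuous_sinh.div continuous_cosh fun x => (cosh_pos x).ne'

lemma Real.integrable_tanh_pow {μ : Measure ℝ} [IsFiniteMeasure μ] (n : ℕ) :
    Integrable (fun x => tanh x ^ n) μ :=
  .of_bound (continuous_tanh.pow n).aestronglyMeasurable 1 <| ae_of_all _ fun x => by
    simpa [abs_pow] using pow_le_one₀ (abs_nonneg _) (abs_tanh_lt_one x).le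

lemma Real.tanh_neg_sub_sq (x : ℝ) :
    tanh (-x) - tanh (-x) ^ 2 = -(exp (2 * x) * (tanh x - tanh x ^ 2)) := by
  have hc := (cosh_pos x).ne'
  rw [tanh_neg, tanh_eq_sinh_div_cosh, two_mul, exp_add, ← cosh_add_sinh]
  field_simp
  linear_combination sinh x * (cosh x + sinh x) * cosh_sq_sub_sinh_sq x

lemma Function.Odd.integral_eq_zero {G E : Type*} [NormedAddCommGroup E] [NormedSpace ℝ E]
    [MeasurableSpace G] [AddGroup G] [MeasurableNeg G] {μ : Measure G} [μ.IsNegInvariant]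
    {f : G → E} (hf : f.Odd) : ∫ x, f x ∂μ = 0 := by
  have : IsAddTorsionFree E := .of_isTorsionFree ℝ E
  have h := integral_neg_eq_self f μ
  rwa [funext hf, integral_neg, neg_eq_self] at h

lemma gaussianPDFReal_self_neg (v : ℝ≥0) (x : ℝ) :
    gaussianPDFReal v v (-x) = exp (-(2 * x)) * gaussianPDFReal v v x := by
  rcases eq_or_ne v 0 with rfl | hv
  · simp
  have hv' : (v : ℝ) ≠ 0 := by exact_mod_cast hv
  rw [gaussianPDFReal, gaussianPDFReal, mul_left_comm, ← exp_add]
  congr 2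
  field_simp
  ring

lemma integral_gaussianReal_self_eq_zero {v : ℝ≥0} {g : ℝ → ℝ}
    (hg : ∀ x, g (-x) = -(exp (2 * x) * g x)) : ∫ x, g x ∂gaussianReal v v = 0 := by
  rcases eq_or_ne v 0 with rfl | hv
  · have h0 := hg 0
    rw [neg_zero, mul_zero, exp_zero, one_mul] at h0
    rw [NNReal.coe_zero, gaussianReal_zero_var, integral_dirac]
    linarith
  rw [integral_gaussianReal_eq_integral_smul hv]
  refine Function.Odd.integral_eq_zero fun x => ?_
  rw [smul_eq_mul, smul_eq_mul, gaussianPDFReal_self_neg, hg, exp_neg]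
  field_simp

lemma stdGaussian_map_const_add_mul (m c : ℝ) :
    stdGaussian.map (fun z => m + c * z) = gaussianReal m ⟨c ^ 2, sq_nonneg c⟩ := by
  have hcomp : (fun z => m + c * z) = (m + ·) ∘ (c * ·) := rfl
  rw [hcomp, ← Measure.map_map (by fun_prop) (by fun_prop), _root_.stdGaussian,
    gaussianReal_map_const_mul, gaussianReal_map_const_add]
  congr 1
  · simp
  · exact mul_one _

/-- Nishimori identity: for `Z ~ N(0,1)` and any `λ > 0`,
`E[tanh (λ + √λ Z)] = E[tanh² (λ + √λ Z)]`. -/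
theorem tanh_eq_tanh_sq (l : ℝ) (hl : 0 < l) :
    ∫ z, Real.tanh (l + Real.sqrt l * z) ∂stdGaussian =
      ∫ z, Real.tanh (l + Real.sqrt l * z) ^ 2 ∂stdGaussian := by
  set v := l.toNNReal
  have hv : (v : ℝ) = l := l.coe_toNNReal hl.le
  have hlaw : stdGaussian.map (fun z => l + √l * z) = gaussianReal v v := by
    rw [stdGaussian_map_const_add_mul, hv]
    congr
    simp [sq_sqrt hl.le, hl.le]
  have hpush (f : ℝ → ℝ) (hf : Continuous f) :
      ∫ z, f (l + √l * z) ∂stdGaussian = ∫ x, f x ∂gaussianReal v v := by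
    rw [← hlaw, integral_map (by fun_prop) hf.aestronglyMeasurable]
  rw [← sub_eq_zero, hpush _ continuous_tanh, hpush (fun x => tanh x ^ 2) (continuous_tanh.pow 2),
    ← integral_sub (by simpa using integrable_tanh_pow 1) (integrable_tanh_pow 2)]
  exact integral_gaussianReal_self_eq_zero tanh_neg_sub_sq
end

section
/- Define h_RS(q; σ², α) = E[log(2 cosh(λ(q) + √λ(q) Z))] − (1/2)λ(q)(1+q) − (1/(2α)) log(1 + (α/σ²)(1−q)), where λ(q) = (σ² + α(1−q))⁻¹ and Z ~ N(0,1). Then for fixed σ² > 0 and α > 0, the partial derivative of h_RS with respect to q vanishes at q if and only if q = E[tanh²(λ(q) + √λ(q) Z)]. -/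
/-!
Write `λ = λ(q)` and `T = E[tanh²(λ + √λ Z)]`. Differentiating under the expectation,
`d/dλ E[log 2cosh(λ + √λ Z)] = E[tanh(λ + √λ Z) (1 + Z / (2√λ))]`. Gaussian integration by parts
gives `E[Z tanh(λ + √λ Z)] = √λ (1 - T)`, and the Nishimori identity `E[tanh] = E[tanh²]` (the
density of `λ + √λ Z` at `-x` is `e^{-2x}` times its density at `x`) turns this derivative into
`(1 + T) / 2`. Since `λ'(q) = αλ²` and the last term of `h_RS` contributes `+λ/2`, cancelling the
`-λ/2` from the middle one, `h_RS'(q) = (αλ²/2) (T - q)` with a positive first factor.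
-/

open MeasureTheory ProbabilityTheory Real Filter

/-- `λ(q) = (σ² + α(1−q))⁻¹`. -/
noncomputable def lamOf (s α q : ℝ) : ℝ := (s + α * (1 - q))⁻¹

/-- Tanaka's replica free-entropy functional
`h_RS(q;σ²,α) = E[log 2cosh(λ(q)+√λ(q)Z)] − ½λ(q)(1+q) − (1/2α)log(1+(α/σ²)(1−q))`. -/
noncomputable def hRS (s α q : ℝ) : ℝ :=
  (∫ z, Real.log (2 * Real.cosh (lamOf s α q + Real.sqrt (lamOf s α q) * z)) ∂stdGaussian)
    - (1 / 2) * lamOf s α q * (1 + q) - (1 / (2 * α)) * Real.log (1 + α / s * (1 - q))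

namespace Real

theorem hasDerivAt_tanh (x : ℝ) : HasDerivAt tanh (1 - tanh x ^ 2) x := by
  have h := (hasDerivAt_sinh x).div (hasDerivAt_cosh x) (cosh_pos x).ne'
  rw [show sinh / cosh = tanh from funext fun y => (tanh_eq_sinh_div_cosh y).symm] at h
  refine h.congr_deriv ?_
  rw [tanh_eq_sinh_div_cosh]
  field_simp

@[fun_prop]
theorem continuous_tanh_s9 : Continuous tanh :=
  continuous_iff_continuousAt.2 fun x => (hasDerivAt_tanh x).continuousAt

theorem hasDerivAt_log_two_cosh (x : ℝ) :
    HasDerivAt (fun y => log (2 * cosh y)) (tanh x) x := by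
  convert ((hasDerivAt_cosh x).const_mul 2).log (by positivity) using 1
  rw [tanh_eq_sinh_div_cosh]
  field_simp

theorem log_two_cosh_nonneg (x : ℝ) : 0 ≤ log (2 * cosh x) :=
  log_nonneg (by linarith [one_le_cosh x])

theorem log_two_cosh_le (x : ℝ) : log (2 * cosh x) ≤ |x| + log 2 := by
  have hcosh : cosh x ≤ exp |x| := by
    rw [← cosh_abs, cosh_eq]
    linarith [exp_le_exp.2 (show -|x| ≤ |x| by linarith [abs_nonneg x])]
  calc log (2 * cosh x) ≤ log (2 * exp |x|) := by gcongr
    _ = |x| + log 2 := by rw [log_mul two_ne_zero (exp_pos _).ne', log_exp, add_comm]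

theorem one_add_tanh_mul_exp (x : ℝ) : (1 + tanh x) * exp (-(2 * x)) = 1 - tanh x := by
  have hx : exp x * exp (-x) = 1 := by rw [← exp_add, add_neg_cancel, exp_zero]
  rw [tanh_eq, show -(2 * x) = -x + -x by ring, exp_add]
  field_simp
  linear_combination 2 * exp (-x) * hx

end Real

instance : IsProbabilityMeasure stdGaussian := by
  unfold _root_.stdGaussian; infer_instance

theorem gaussianPDFReal_zero_one (z : ℝ) :
    gaussianPDFReal 0 1 z = (√(2 * π))⁻¹ * exp (-z ^ 2 / 2) := by
  simp [gaussianPDFReal]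

theorem hasDerivAt_gaussianPDFReal_zero_one (z : ℝ) :
    HasDerivAt (gaussianPDFReal 0 1) (-z * gaussianPDFReal 0 1 z) z := by
  rw [show gaussianPDFReal 0 1 = fun z => (√(2 * π))⁻¹ * exp (-z ^ 2 / 2) from
    funext gaussianPDFReal_zero_one]
  have hexponent : HasDerivAt (fun z : ℝ => -z ^ 2 / 2) (-z) z := by
    refine ((hasDerivAt_pow 2 z).fun_neg.div_const 2).congr_deriv ?_
    simp only [Nat.cast_ofNat, Nat.add_one_sub_one, pow_one]; ring
  refine (hexponent.exp.const_mul (√(2 * π))⁻¹).congr_deriv ?_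
  ring

theorem integral_stdGaussian_eq (g : ℝ → ℝ) :
    ∫ z, g z ∂stdGaussian = ∫ z, gaussianPDFReal 0 1 z * g z :=
  integral_gaussianReal_eq_integral_smul one_ne_zero

theorem integrable_stdGaussian_iff {g : ℝ → ℝ} :
    Integrable g stdGaussian ↔ Integrable (fun z => gaussianPDFReal 0 1 z * g z) volume := by
  rw [_root_.stdGaussian, gaussianReal_of_var_ne_zero 0 one_ne_zero,
    integrable_withDensity_iff_integrable_smul' (measurable_gaussianPDF 0 1)
      (ae_of_all _ fun _ => gaussianPDF_lt_top)]
  simp only [toReal_gaussianPDF, smul_eq_mul]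

theorem integrable_abs_stdGaussian : Integrable (fun z => |z|) stdGaussian :=
  ((memLp_id_gaussianReal 1).integrable le_rfl).abs

theorem integral_mul_stdGaussian_eq_integral_deriv {g g' : ℝ → ℝ} {C C' : ℝ}
    (hg : ∀ z, HasDerivAt g (g' z) z) (hgC : ∀ z, |g z| ≤ C) (hg'C : ∀ z, |g' z| ≤ C') :
    ∫ z, z * g z ∂stdGaussian = ∫ z, g' z ∂stdGaussian := by
  have hg_cont : Continuous g := continuous_iff_continuousAt.2 fun z => (hg z).continuousAt
  have hg'_meas : Measurable g' := funext (fun z => (hg z).deriv) ▸ measurable_deriv g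
  have hIg : Integrable g stdGaussian :=
    .of_bound hg_cont.aestronglyMeasurable C (ae_of_all _ hgC)
  have hIg' : Integrable g' stdGaussian :=
    .of_bound hg'_meas.aestronglyMeasurable C' (ae_of_all _ hg'C)
  have hIzg : Integrable (fun z => -z * g z) stdGaussian := by
    refine (integrable_abs_stdGaussian.const_mul C).mono'
      (by fun_prop) (ae_of_all _ fun z => ?_)
    rw [norm_mul, norm_neg, Real.norm_eq_abs, Real.norm_eq_abs, mul_comm C]
    exact mul_le_mul_of_nonneg_left (hgC z) (abs_nonneg z)
  rw [integrable_stdGaussian_iff] at hIg hIg' hIzg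
  have hparts := integral_mul_deriv_eq_deriv_mul_of_integrable (u := g) (v := gaussianPDFReal 0 1)
    (fun z _ => hg z) (fun z _ => hasDerivAt_gaussianPDFReal_zero_one z)
    (by convert hIzg using 2 with z; simp only [Pi.mul_apply]; ring)
    (by convert hIg' using 2 with z; simp only [Pi.mul_apply]; ring)
    (by convert hIg using 2 with z; simp only [Pi.mul_apply]; ring)
  rw [integral_stdGaussian_eq, integral_stdGaussian_eq]
  calc ∫ z, gaussianPDFReal 0 1 z * (z * g z)
      = -∫ z, g z * (-z * gaussianPDFReal 0 1 z) := by
        rw [← integral_neg]; congr 1 with z; ring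
    _ = ∫ z, gaussianPDFReal 0 1 z * g' z := by
        rw [hparts, neg_neg]; congr 1 with z; ring

theorem integral_stdGaussian_comp_reflect (g : ℝ → ℝ) (b : ℝ) :
    ∫ z, g (b ^ 2 + b * z) ∂stdGaussian =
      ∫ z, exp (-(2 * (b ^ 2 + b * z))) * g (-(b ^ 2 + b * z)) ∂stdGaussian := by
  rw [integral_stdGaussian_eq, integral_stdGaussian_eq,
    ← integral_sub_left_eq_self _ volume (-(2 * b))]
  congr 1 with z
  have hdensity :
      exp (-(-(2 * b) - z) ^ 2 / 2) = exp (-z ^ 2 / 2) * exp (-(2 * (b ^ 2 + b * z))) := by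
    rw [← exp_add]; ring_nf
  rw [gaussianPDFReal_zero_one, gaussianPDFReal_zero_one, hdensity,
    show b ^ 2 + b * (-(2 * b) - z) = -(b ^ 2 + b * z) by ring]
  ring

theorem integrable_tanh_affine (a b : ℝ) :
    Integrable (fun z => tanh (a + b * z)) stdGaussian :=
  .of_bound (by fun_prop) 1 (ae_of_all _ fun _ => (abs_tanh_lt_one _).le)

theorem integrable_tanh_affine_sq (a b : ℝ) :
    Integrable (fun z => tanh (a + b * z) ^ 2) stdGaussian :=
  .of_bound (by fun_prop) 1 (ae_of_all _ fun _ => by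
    rw [Real.norm_eq_abs, abs_of_nonneg (sq_nonneg _)]; exact (tanh_sq_lt_one _).le)

theorem integral_tanh_eq_integral_tanh_sq (b : ℝ) :
    ∫ z, tanh (b ^ 2 + b * z) ∂stdGaussian = ∫ z, tanh (b ^ 2 + b * z) ^ 2 ∂stdGaussian := by
  have hreflect (x : ℝ) :
      exp (-(2 * x)) * (tanh (-x) - tanh (-x) ^ 2) = -(tanh x - tanh x ^ 2) := by
    rw [tanh_neg]
    linear_combination -tanh x * one_add_tanh_mul_exp x
  have h := integral_stdGaussian_comp_reflect (fun x => tanh x - tanh x ^ 2) b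
  simp only [hreflect, integral_neg] at h
  rw [integral_sub (integrable_tanh_affine _ b) (integrable_tanh_affine_sq _ b)] at h
  linarith

theorem integrable_log_two_cosh_affine (a b : ℝ) :
    Integrable (fun z => log (2 * cosh (a + b * z))) stdGaussian := by
  refine ((integrable_const (|a| + log 2)).add (integrable_abs_stdGaussian.const_mul |b|)).mono'
    (Continuous.log (by fun_prop) fun z => by positivity).aestronglyMeasurable
    (ae_of_all _ fun z => ?_)
  rw [Real.norm_eq_abs, abs_of_nonneg (log_two_cosh_nonneg _)]
  have hle := log_two_cosh_le (a + b * z)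
  have htri := abs_add_le a (b * z)
  rw [abs_mul] at htri
  simp only [Pi.add_apply]
  linarith

noncomputable def scalarFreeEntropy (l : ℝ) : ℝ :=
  ∫ z, log (2 * cosh (l + √l * z)) ∂stdGaussian

theorem hasDerivAt_scalarFreeEntropy_eq_integral {l : ℝ} (hl : 0 < l) :
    HasDerivAt scalarFreeEntropy
      (∫ z, tanh (l + √l * z) * (1 + 1 / (2 * √l) * z) ∂stdGaussian) l := by
  have hball : ∀ t ∈ Metric.ball l (l / 2), l / 2 < t := fun t ht => by
    rw [Metric.mem_ball, Real.dist_eq, abs_lt] at ht; linarith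
  have hbound : ∀ z, ∀ t ∈ Metric.ball l (l / 2),
      ‖tanh (t + √t * z) * (1 + 1 / (2 * √t) * z)‖ ≤ 1 + 1 / (2 * √(l / 2)) * |z| := by
    intro z t ht
    have hcoef : 1 / (2 * √t) ≤ 1 / (2 * √(l / 2)) := by
      gcongr
      exact (hball t ht).le
    rw [norm_mul, Real.norm_eq_abs, Real.norm_eq_abs]
    calc |tanh (t + √t * z)| * |1 + 1 / (2 * √t) * z|
        ≤ 1 * (1 + 1 / (2 * √t) * |z|) := by
          gcongr
          · exact (abs_tanh_lt_one _).le
          · exact (abs_add_le _ _).trans_eq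
              (by rw [abs_one, abs_mul, abs_of_nonneg (by positivity)])
      _ ≤ 1 + 1 / (2 * √(l / 2)) * |z| := by
          rw [one_mul]; gcongr
  have hderiv : ∀ z, ∀ t ∈ Metric.ball l (l / 2),
      HasDerivAt (fun t => log (2 * cosh (t + √t * z)))
        (tanh (t + √t * z) * (1 + 1 / (2 * √t) * z)) t := fun z t ht =>
    (hasDerivAt_log_two_cosh _).comp t
      ((hasDerivAt_id' t).add ((hasDerivAt_sqrt (by linarith [hball t ht])).mul_const z))
  exact (hasDerivAt_integral_of_dominated_loc_of_deriv_le (Metric.ball_mem_nhds l (half_pos hl))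
    (Eventually.of_forall fun t => (integrable_log_two_cosh_affine t √t).aestronglyMeasurable)
    (integrable_log_two_cosh_affine l √l) (by fun_prop) (ae_of_all _ hbound)
    ((integrable_const 1).add (integrable_abs_stdGaussian.const_mul _)) (ae_of_all _ hderiv)).2

theorem integral_tanh_mul_one_add_eq {l : ℝ} (hl : 0 < l) :
    ∫ z, tanh (l + √l * z) * (1 + 1 / (2 * √l) * z) ∂stdGaussian =
      (1 + ∫ z, tanh (l + √l * z) ^ 2 ∂stdGaussian) / 2 := by
  obtain ⟨b, hb, rfl⟩ : ∃ b, 0 < b ∧ l = b ^ 2 := ⟨√l, sqrt_pos.2 hl, (sq_sqrt hl.le).symm⟩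
  rw [sqrt_sq hb.le]
  have hIz : Integrable (fun z => z * tanh (b ^ 2 + b * z)) stdGaussian :=
    integrable_abs_stdGaussian.mono' (by fun_prop) (ae_of_all _ fun z => by
      rw [norm_mul, Real.norm_eq_abs, Real.norm_eq_abs]
      exact mul_le_of_le_one_right (abs_nonneg z) (abs_tanh_lt_one _).le)
  have hstein : ∫ z, z * tanh (b ^ 2 + b * z) ∂stdGaussian =
      b * (1 - ∫ z, tanh (b ^ 2 + b * z) ^ 2 ∂stdGaussian) := by
    rw [integral_mul_stdGaussian_eq_integral_deriv (g := fun z => tanh (b ^ 2 + b * z))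
      (g' := fun z => b * (1 - tanh (b ^ 2 + b * z) ^ 2)) (C := 1) (C' := b)
      (fun z => ((hasDerivAt_tanh _).comp z
        (((hasDerivAt_id' z).const_mul b).const_add (b ^ 2))).congr_deriv (by ring))
      (fun z => (abs_tanh_lt_one _).le)
      (fun z => by
        rw [abs_mul, abs_of_pos hb, abs_of_pos (sub_pos.2 (tanh_sq_lt_one _))]
        exact mul_le_of_le_one_right hb.le (by linarith [sq_nonneg (tanh (b ^ 2 + b * z))])),
      integral_const_mul, integral_sub (integrable_const 1) (integrable_tanh_affine_sq _ b),
      integral_const]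
    simp only [probReal_univ, smul_eq_mul, mul_one]
  calc ∫ z, tanh (b ^ 2 + b * z) * (1 + 1 / (2 * b) * z) ∂stdGaussian
      = ∫ z, tanh (b ^ 2 + b * z) ∂stdGaussian
          + 1 / (2 * b) * ∫ z, z * tanh (b ^ 2 + b * z) ∂stdGaussian := by
        rw [← integral_const_mul, ← integral_add (integrable_tanh_affine _ b) (hIz.const_mul _)]
        congr 1 with z; ring
    _ = (1 + ∫ z, tanh (b ^ 2 + b * z) ^ 2 ∂stdGaussian) / 2 := by
        rw [hstein, integral_tanh_eq_integral_tanh_sq]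
        field_simp
        ring

theorem hasDerivAt_scalarFreeEntropy {l : ℝ} (hl : 0 < l) :
    HasDerivAt scalarFreeEntropy ((1 + ∫ z, tanh (l + √l * z) ^ 2 ∂stdGaussian) / 2) l :=
  integral_tanh_mul_one_add_eq hl ▸ hasDerivAt_scalarFreeEntropy_eq_integral hl

theorem hasDerivAt_lamOf {s α q : ℝ} (hq : s + α * (1 - q) ≠ 0) :
    HasDerivAt (lamOf s α) (α * lamOf s α q ^ 2) q := by
  have h := ((((hasDerivAt_id' q).const_sub 1).const_mul α).const_add s).inv hq
  refine h.congr_deriv ?_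
  rw [lamOf]
  field_simp

theorem hasDerivAt_hRS {s α q : ℝ} (hs : s ≠ 0) (hα : α ≠ 0) (hq : 0 < s + α * (1 - q)) :
    HasDerivAt (hRS s α)
      (α * lamOf s α q ^ 2 / 2 *
        ((∫ z, tanh (lamOf s α q + √(lamOf s α q) * z) ^ 2 ∂stdGaussian) - q)) q := by
  have hlam := hasDerivAt_lamOf hq.ne'
  have hlog : HasDerivAt (fun t => log (1 + α / s * (1 - t)))
      (-(α / s) / (1 + α / s * (1 - q))) q := by
    have hinner := (((hasDerivAt_id' q).const_sub 1).const_mul (α / s)).const_add 1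
    refine (hinner.log ?_).congr_deriv ?_
    · rw [show 1 + α / s * (1 - q) = (s + α * (1 - q)) / s by field_simp]
      exact div_ne_zero hq.ne' hs
    · ring
  have h := (((hasDerivAt_scalarFreeEntropy (inv_pos.2 hq)).comp q hlam).sub
    ((hlam.const_mul (1 / 2)).mul ((hasDerivAt_id' q).const_add 1))).sub
    (hlog.const_mul (1 / (2 * α)))
  -- `hRS s α` is `scalarFreeEntropy ∘ lamOf s α` minus the two explicit terms, definitionally.
  refine h.congr_deriv ?_
  rw [lamOf]
  field_simp
  ring

theorem hRS_stationary_iff_general (s α : ℝ) (hs : 0 < s) (hα : 0 < α)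
    (q : ℝ) (hq1 : q < 1 + s / α) (d : ℝ)
    (hderiv : HasDerivAt (fun q' => hRS s α q') d q) :
    d = 0 ↔
      q = ∫ z, Real.tanh (lamOf s α q + Real.sqrt (lamOf s α q) * z) ^ 2 ∂stdGaussian := by
  have hq : 0 < s + α * (1 - q) := by
    have : α * (q - 1) < s := by rw [← lt_div_iff₀' hα]; linarith
    linarith
  have hcoef : α * lamOf s α q ^ 2 / 2 ≠ 0 := by
    have := inv_pos.2 hq
    rw [lamOf]; positivity
  rw [hderiv.unique (hasDerivAt_hRS hs.ne' hα.ne' hq), mul_eq_zero, or_iff_right hcoef,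
    sub_eq_zero, eq_comm]

/-- For fixed `σ² > 0`, `α > 0` and `0 ≤ q < 1 + σ²/α`, the derivative of
`q ↦ h_RS(q;σ²,α)` vanishes at `q` iff `q = E[tanh²(λ(q)+√λ(q)Z)]`
(Tanaka's stationarity condition). -/
theorem hRS_stationary_iff (s α : ℝ) (hs : 0 < s) (hα : 0 < α)
    (q : ℝ) (hq0 : 0 ≤ q) (hq1 : q < 1 + s / α) (d : ℝ)
    (hderiv : HasDerivAt (fun q' => hRS s α q') d q) :
    d = 0 ↔
      q = ∫ z, Real.tanh (lamOf s α q + Real.sqrt (lamOf s α q) * z) ^ 2 ∂stdGaussian :=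
  hRS_stationary_iff_general s α hs hα q hq1 d hderiv
end
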